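/- Let q be a prime power, k ≥ 1, and S a nonempty subset of {0,1,...,k-1}, with n ≥ 2k. Then the generalized Grassmann graph J_{q,S}(n,k) contains a triangle; in particular its girth is 3. -/

import Mathlib

open Finset

namespace ZFPaper

variable {V : Type*}

/-- Zero forcing propagation: `Forces G B v` means `v` eventually gets colored black
starting from the initially black set `B`. -/
inductive Forces (G : SimpleGraph V) (B : Set V) : V → Prop
  | init (v : V) : v ∈ B → Forces G B v
  | force (u v : V) : G.Adj u v → Forces G B u →
      (∀ w, G.Adj u w → w ≠ v → Forces G B w) → Forces G B v

/-- `B` is a zero forcing set of `G`. -/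
def IsZeroForcingSet (G : SimpleGraph V) (B : Set V) : Prop := ∀ v, Forces G B v

/-- The zero forcing number `Z(G)`. -/
noncomputable def zeroForcingNumber (G : SimpleGraph V) : ℕ :=
  sInf {m | ∃ B : Finset V, B.card = m ∧ IsZeroForcingSet G ↑B}

/-- The total zero forcing number `Z_t(G)`. -/
noncomputable def totalZeroForcingNumber (G : SimpleGraph V) : ℕ :=
  sInf {m | ∃ B : Finset V, B.card = m ∧ IsZeroForcingSet G ↑B ∧
    ∀ v ∈ B, ∃ u ∈ B, G.Adj v u}

/-- The connected zero forcing number `Z_c(G)`. -/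
noncomputable def connectedZeroForcingNumber (G : SimpleGraph V) : ℕ :=
  sInf {m | ∃ B : Finset V, B.card = m ∧ IsZeroForcingSet G ↑B ∧
    (G.induce (↑B : Set V)).Connected}

/-- The closed neighborhood of a vertex. -/
def closedNbhd (G : SimpleGraph V) (v : V) : Set V := G.neighborSet v ∪ {v}

/-- A Z-Grundy dominating sequence: each vertex has an open neighbor not yet dominated,
and at the end every vertex is dominated. -/
def IsZGrundySeq (G : SimpleGraph V) (l : List V) : Prop :=
  (∀ i : Fin l.length,
    ((G.neighborSet (l.get i)) \
      (⋃ j : Fin l.length, ⋃ _ : (j : ℕ) < (i : ℕ), closedNbhd G (l.get j))).Nonempty) ∧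
  ∀ v : V, ∃ i : Fin l.length, v ∈ closedNbhd G (l.get i)

/-- The Z-Grundy domination number `γ_gr^Z(G)`. -/
noncomputable def zGrundyNumber (G : SimpleGraph V) : ℕ :=
  sSup {m | ∃ l : List V, IsZGrundySeq G l ∧ l.length = m}

/-- The generalized Johnson graph `J_S(n,k)`. -/
def genJohnson (n k : ℕ) (S : Finset ℕ) :
    SimpleGraph {A : Finset (Fin n) // A.card = k} where
  Adj v w := v ≠ w ∧ (v.1 ∩ w.1).card ∈ S
  symm := by
    constructor
    rintro v w ⟨h1, h2⟩
    exact ⟨h1.symm, by rwa [Finset.inter_comm]⟩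
  loopless := by constructor; rintro v ⟨h1, -⟩; exact h1 rfl

/-- The generalized Grassmann graph `J_{q,S}(n,k)` over a finite field `F` of order `q`. -/
def genGrassmann (F : Type*) [Field F] (n k : ℕ) (S : Finset ℕ) :
    SimpleGraph {W : Submodule F (Fin n → F) // Module.finrank F W = k} where
  Adj v w := v ≠ w ∧ Module.finrank F ↥(v.1 ⊓ w.1) ∈ S
  symm := by
    constructor
    rintro v w ⟨h1, h2⟩
    exact ⟨h1.symm, by rwa [inf_comm w.1 v.1]⟩
  loopless := by constructor; rintro v ⟨h1, -⟩; exact h1 rfl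

/-- The Hamming graph `H(n,q)`. -/
def hammingGraph (n q : ℕ) : SimpleGraph (Fin n → Fin q) where
  Adj x y := hammingDist x y = 1
  symm := ⟨fun x y (h : hammingDist x y = 1) => by show hammingDist y x = 1; rwa [hammingDist_comm]⟩
  loopless := ⟨fun x (h : hammingDist x x = 1) => by simp only [hammingDist_self] at h; exact absurd h (by norm_num)⟩


open Module Submodule in
lemma ZF_card_univ_filter_fin (n : ℕ) (P : ℕ → Prop) [DecidablePred P] :
    (Finset.univ.filter (fun j : Fin n => P (j : ℕ))).card
      = ((Finset.range n).filter P).card := by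
  apply Finset.card_bij (fun (j : Fin n) _ => (j : ℕ))
  · intro j hj
    simp only [Finset.mem_filter, Finset.mem_univ, true_and] at hj
    simp [hj, j.is_lt]
  · intro a _ b _ h
    exact Fin.val_injective h
  · intro m hm
    simp only [Finset.mem_filter, Finset.mem_range] at hm
    exact ⟨⟨m, hm.1⟩, by simp [hm.2], rfl⟩

open Module Submodule in
lemma ZF_span_basis_image_inter {F : Type} [Field F] {ι M : Type*} [AddCommGroup M]
    [Module F M] (b : Basis ι F M) (t u : Set ι) :
    span F (b '' t) ⊓ span F (b '' u) = span F (b '' (t ∩ u)) := by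
  apply le_antisymm
  · intro x hx
    rw [Submodule.mem_inf] at hx
    rw [Basis.mem_span_image] at hx ⊢
    rw [Basis.mem_span_image] at hx
    exact Set.subset_inter hx.1 hx.2
  · exact le_inf (span_mono (Set.image_mono Set.inter_subset_left))
      (span_mono (Set.image_mono Set.inter_subset_right))

open Module Submodule in
lemma ZF_finrank_span_basis_image {F : Type} [Field F] {ι M : Type*} [Fintype ι]
    [DecidableEq M] [AddCommGroup M] [Module F M] (b : Basis ι F M) (t : Finset ι) :
    finrank F (span F (b '' (t : Set ι))) = t.card := by
  classical
  have li0 : LinearIndependent F (fun x : (t : Set ι) => b x) :=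
    b.linearIndependent.comp _ Subtype.val_injective
  have li : LinearIndependent F ((↑) : (b '' (t : Set ι)) → M) := LinearIndepOn.id_image (v := b) (s := (t : Set ι)) li0
  rw [finrank_span_set_eq_card li]
  rw [Set.toFinset_image]
  rw [Finset.card_image_of_injective _ b.injective]
  simp

open Module Submodule in
lemma ZF_exists_triangle_subspaces (F : Type) [Field F] (n s d : ℕ) (hd : 1 ≤ d)
    (hn : s + d + d ≤ n) :
    ∃ U V W : Submodule F (Fin n → F),
      finrank F U = s + d ∧ finrank F V = s + d ∧ finrank F W = s + d ∧
      finrank F ↥(U ⊓ V) = s ∧ finrank F ↥(U ⊓ W) = s ∧ finrank F ↥(V ⊓ W) = s := by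
  classical
  -- the nilpotent shift map
  set Nm : (Fin n → F) →ₗ[F] (Fin n → F) :=
    { toFun := fun x j =>
        if h : s ≤ (j : ℕ) ∧ (j : ℕ) < s + d then x ⟨(j : ℕ) + d, by omega⟩ else 0
      map_add' := by
        intro x y; funext j
        by_cases h : s ≤ (j : ℕ) ∧ (j : ℕ) < s + d <;> simp [h]
      map_smul' := by
        intro a x; funext j
        by_cases h : s ≤ (j : ℕ) ∧ (j : ℕ) < s + d <;> simp [h] } with hNm
  have hNapp : ∀ (x : Fin n → F) (j : Fin n),
      Nm x j = if h : s ≤ (j : ℕ) ∧ (j : ℕ) < s + d then x ⟨(j : ℕ) + d, by omega⟩ else 0 := by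
    intro x j; rfl
  have hNN : ∀ x : Fin n → F, Nm (Nm x) = 0 := by
    intro x; funext j
    rw [hNapp]
    split_ifs with h1
    · rw [hNapp]
      rw [dif_neg]
      · rfl
      · simp only [not_and, not_lt]
        intro _; omega
    · rfl
  set phi : (Fin n → F) ≃ₗ[F] (Fin n → F) :=
    LinearEquiv.ofLinear (LinearMap.id + Nm) (LinearMap.id - Nm)
      (by
        apply LinearMap.ext; intro x
        simp only [LinearMap.comp_apply, LinearMap.add_apply, LinearMap.sub_apply,
          LinearMap.id_apply, map_sub, hNN]
        abel)
      (by
        apply LinearMap.ext; intro x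
        simp only [LinearMap.comp_apply, LinearMap.add_apply, LinearMap.sub_apply,
          LinearMap.id_apply, map_add, hNN]
        abel) with hphi
  set e : Basis (Fin n) F (Fin n → F) := Pi.basisFun F (Fin n) with he
  set c : Basis (Fin n) F (Fin n → F) := e.map phi with hc
  have hNe : ∀ j : Fin n, (j : ℕ) < s + d → Nm (e j) = 0 := by
    intro j hj
    funext m
    rw [hNapp]
    split_ifs with h
    · have : e j = Pi.single j 1 := by simp [he]
      rw [this]
      apply Pi.single_eq_of_ne
      intro heq
      have : ((⟨(m : ℕ) + d, by omega⟩ : Fin n) : ℕ) = (j : ℕ) := by rw [heq]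
      simp at this; omega
    · rfl
  have hce : ∀ j : Fin n, (j : ℕ) < s + d → c j = e j := by
    intro j hj
    rw [hc, Basis.map_apply, hphi, LinearEquiv.ofLinear_apply]
    simp [hNe j hj]
  -- index sets
  set t0 : Finset (Fin n) := Finset.univ.filter (fun j => (j : ℕ) < s) with ht0
  set t1 : Finset (Fin n) := Finset.univ.filter (fun j => (j : ℕ) < s + d) with ht1
  set t2 : Finset (Fin n) := Finset.univ.filter
    (fun j => (j : ℕ) < s ∨ (s + d ≤ (j : ℕ) ∧ (j : ℕ) < s + d + d)) with ht2
  have ht0card : t0.card = s := by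
    rw [ht0, ZF_card_univ_filter_fin n (fun m => m < s)]
    have : (Finset.range n).filter (fun j => j < s) = Finset.range s := by
      ext m; simp only [Finset.mem_filter, Finset.mem_range]; omega
    rw [this, Finset.card_range]
  have ht1card : t1.card = s + d := by
    rw [ht1, ZF_card_univ_filter_fin n (fun m => m < s + d)]
    have : (Finset.range n).filter (fun j => j < s + d) = Finset.range (s + d) := by
      ext m; simp only [Finset.mem_filter, Finset.mem_range]; omega
    rw [this, Finset.card_range]
  have ht2card : t2.card = s + d := by
    rw [ht2, ZF_card_univ_filter_fin n (fun m => m < s ∨ (s + d ≤ m ∧ m < s + d + d))]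
    have : (Finset.range n).filter (fun j => j < s ∨ (s + d ≤ j ∧ j < s + d + d))
        = Finset.range s ∪ Finset.Ico (s + d) (s + d + d) := by
      ext m
      simp only [Finset.mem_filter, Finset.mem_range, Finset.mem_union, Finset.mem_Ico]
      omega
    rw [this, Finset.card_union_of_disjoint, Finset.card_range, Nat.card_Ico]
    · omega
    · simp only [Finset.disjoint_left, Finset.mem_range, Finset.mem_Ico]
      intro m hm; omega
  have ht12 : ((t1 : Set (Fin n)) ∩ (t2 : Set (Fin n))) = (t0 : Set (Fin n)) := by
    ext j
    simp only [ht0, ht1, ht2, Finset.coe_filter, Finset.mem_univ, true_and,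
      Set.mem_inter_iff, Set.mem_setOf_eq]
    omega
  have ht02 : (t0 : Set (Fin n)) ⊆ (t2 : Set (Fin n)) := by
    intro j hj
    simp only [ht0, ht2, Finset.coe_filter, Finset.mem_univ, true_and,
      Set.mem_setOf_eq] at hj ⊢
    omega
  have himg1 : (e '' (t1 : Set (Fin n))) = (c '' (t1 : Set (Fin n))) := by
    apply Set.image_congr
    intro j hj
    simp only [ht1, Finset.coe_filter, Finset.mem_univ, true_and, Set.mem_setOf_eq] at hj
    exact (hce j hj).symm
  have himg0 : (e '' (t0 : Set (Fin n))) = (c '' (t0 : Set (Fin n))) := by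
    apply Set.image_congr
    intro j hj
    simp only [ht0, Finset.coe_filter, Finset.mem_univ, true_and, Set.mem_setOf_eq] at hj
    exact (hce j (by omega)).symm
  refine ⟨span F (e '' (t1 : Set (Fin n))), span F (e '' (t2 : Set (Fin n))),
    span F (c '' (t2 : Set (Fin n))), ?_, ?_, ?_, ?_, ?_, ?_⟩
  · rw [ZF_finrank_span_basis_image, ht1card]
  · rw [ZF_finrank_span_basis_image, ht2card]
  · rw [ZF_finrank_span_basis_image, ht2card]
  · rw [ZF_span_basis_image_inter, ht12, ZF_finrank_span_basis_image, ht0card]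
  · rw [himg1, ZF_span_basis_image_inter, ht12, ← himg0, ZF_finrank_span_basis_image,
      ht0card]
  · -- the hard intersection
    have key : span F (e '' (t2 : Set (Fin n))) ⊓ span F (c '' (t2 : Set (Fin n)))
        = span F (e '' (t0 : Set (Fin n))) := by
      apply le_antisymm
      · intro x hx
        rw [Submodule.mem_inf] at hx
        obtain ⟨h2, h3⟩ := hx
        rw [Basis.mem_span_image] at h2 h3 ⊢
        have hx2 : ∀ j : Fin n,
            ¬((j : ℕ) < s ∨ (s + d ≤ (j : ℕ) ∧ (j : ℕ) < s + d + d)) → x j = 0 := by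
          intro j hj
          by_contra hxj
          have hmem : j ∈ (e.repr x).support := by
            rw [Finsupp.mem_support_iff, he, Pi.basisFun_repr]
            exact hxj
          have := h2 hmem
          simp only [ht2, Finset.coe_filter, Finset.mem_univ, true_and,
            Set.mem_setOf_eq] at this
          exact hj this
        have hx3 : ∀ j : Fin n,
            ¬((j : ℕ) < s ∨ (s + d ≤ (j : ℕ) ∧ (j : ℕ) < s + d + d)) →
            x j - Nm x j = 0 := by
          intro j hj
          by_contra hxj
          have hrepr : (c.repr x) j = x j - Nm x j := by
            rw [hc, Basis.map_repr]
            simp only [LinearEquiv.trans_apply]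
            rw [hphi, LinearEquiv.ofLinear_symm_apply]
            simp only [LinearMap.sub_apply, LinearMap.id_apply]
            rw [he, Pi.basisFun_repr]
            rfl
          have hmem : j ∈ (c.repr x).support := by
            rw [Finsupp.mem_support_iff, hrepr]
            exact hxj
          have := h3 hmem
          simp only [ht2, Finset.coe_filter, Finset.mem_univ, true_and,
            Set.mem_setOf_eq] at this
          exact hj this
        intro j hj
        rw [Finset.mem_coe, Finsupp.mem_support_iff, he, Pi.basisFun_repr] at hj
        simp only [ht0, Finset.coe_filter, Finset.mem_univ, true_and, Set.mem_setOf_eq]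
        by_contra hs'
        push_neg at hs'
        rcases lt_or_ge (j : ℕ) (s + d) with hlt | hge
        · exact hj (hx2 j (by omega))
        · rcases lt_or_ge (j : ℕ) (s + d + d) with hlt2 | hge2
          · -- j ∈ [s+d, s+2d): use hx3 at m = j - d
            set m : Fin n := ⟨(j : ℕ) - d, by omega⟩ with hm
            have hm1 : ¬((m : ℕ) < s ∨ (s + d ≤ (m : ℕ) ∧ (m : ℕ) < s + d + d)) := by
              simp only [hm]; omega
            have h3m := hx3 m hm1
            have h2m := hx2 m hm1
            have hNmx : Nm x m = x j := by
              rw [hNapp]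
              rw [dif_pos (by simp only [hm]; omega)]
              congr 1
              apply Fin.ext
              simp only [hm]
              omega
            rw [h2m, hNmx] at h3m
            rw [zero_sub, neg_eq_zero] at h3m
            exact hj h3m
          · exact hj (hx2 j (by omega))
      · refine le_inf (span_mono (Set.image_mono ht02)) ?_
        rw [himg0]
        exact span_mono (Set.image_mono ht02)
    rw [key, ZF_finrank_span_basis_image, ht0card]

/-- generalized Grassmann graphs contain triangles and have girth 3. -/
theorem genGrassmann_girth (F : Type) [Field F] [Fintype F] (n k : ℕ) (hk : 1 ≤ k)
    (hn : 2 * k ≤ n) (S : Finset ℕ) (hS : S.Nonempty) (hsub : S ⊆ Finset.range k) :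
    (∃ u v w, (genGrassmann F n k S).Adj u v ∧ (genGrassmann F n k S).Adj v w ∧
      (genGrassmann F n k S).Adj u w) ∧
    (genGrassmann F n k S).girth = 3 := by
  classical
  obtain ⟨s, hsS⟩ := hS
  have hsk : s < k := Finset.mem_range.mp (hsub hsS)
  set d := k - s with hd
  obtain ⟨U, V, W, hU, hV, hW, hUV, hUW, hVW⟩ :=
    ZF_exists_triangle_subspaces F n s d (by omega) (by omega)
  have hsd : s + d = k := by omega
  rw [hsd] at hU hV hW
  set G := genGrassmann F n k S with hG
  set u : {W : Submodule F (Fin n → F) // Module.finrank F W = k} := ⟨U, hU⟩ with hu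
  set v : {W : Submodule F (Fin n → F) // Module.finrank F W = k} := ⟨V, hV⟩ with hv
  set w : {W' : Submodule F (Fin n → F) // Module.finrank F W' = k} := ⟨W, hW⟩ with hw
  have hne : ∀ (A B : Submodule F (Fin n → F)), Module.finrank F A = k →
      Module.finrank F ↥(A ⊓ B) = s → A ≠ B := by
    intro A B hA hAB hEq
    rw [hEq, inf_idem] at hAB
    rw [hEq] at hA
    omega
  have huv : G.Adj u v := by
    refine ⟨?_, ?_⟩
    · intro h
      exact hne U V hU hUV (congrArg Subtype.val h)
    · show Module.finrank F ↥(U ⊓ V) ∈ S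
      rw [hUV]; exact hsS
  have hvw : G.Adj v w := by
    refine ⟨?_, ?_⟩
    · intro h
      exact hne V W hV hVW (congrArg Subtype.val h)
    · show Module.finrank F ↥(V ⊓ W) ∈ S
      rw [hVW]; exact hsS
  have huw : G.Adj u w := by
    refine ⟨?_, ?_⟩
    · intro h
      exact hne U W hU hUW (congrArg Subtype.val h)
    · show Module.finrank F ↥(U ⊓ W) ∈ S
      rw [hUW]; exact hsS
  refine ⟨⟨u, v, w, huv, hvw, huw⟩, ?_⟩
  -- girth = 3
  set p : G.Walk u u := .cons huv (.cons hvw (.cons huw.symm .nil)) with hp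
  have hcyc : p.IsCycle := by
    rw [hp]
    rw [SimpleGraph.Walk.cons_isCycle_iff]
    constructor
    · rw [SimpleGraph.Walk.cons_isPath_iff]
      refine ⟨?_, ?_⟩
      · rw [SimpleGraph.Walk.cons_isPath_iff]
        refine ⟨SimpleGraph.Walk.IsPath.nil, ?_⟩
        simp only [SimpleGraph.Walk.support_nil, List.mem_cons, List.not_mem_nil, or_false]
        exact huw.ne'
      · simp only [SimpleGraph.Walk.support_cons, SimpleGraph.Walk.support_nil,
          List.mem_cons, List.not_mem_nil, or_false]
        push_neg
        exact ⟨hvw.ne, huv.ne'⟩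
    · simp only [SimpleGraph.Walk.edges_cons, SimpleGraph.Walk.edges_nil,
        List.mem_cons, List.not_mem_nil, or_false]
      push_neg
      constructor
      · intro h
        rw [Sym2.eq_iff] at h
        rcases h with ⟨h1, h2⟩ | ⟨h1, h2⟩
        · exact huv.ne h1
        · exact huw.ne h1
      · intro h
        rw [Sym2.eq_iff] at h
        rcases h with ⟨h1, h2⟩ | ⟨h1, h2⟩
        · exact huw.ne h1
        · exact hvw.ne h2
  have hlen : p.length = 3 := by simp [hp]
  have hle : G.egirth ≤ 3 := by
    have h1 : G.egirth ≤ (p.length : ℕ∞) := by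
      rw [SimpleGraph.egirth]
      exact iInf_le_of_le u (iInf_le_of_le p (iInf_le _ hcyc))
    rw [hlen] at h1
    exact_mod_cast h1
  have hge : (3 : ℕ∞) ≤ G.egirth := SimpleGraph.three_le_egirth
  have hegirth : G.egirth = 3 := le_antisymm hle hge
  rw [SimpleGraph.girth, hegirth]
  rfl

end ZFPaper
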